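/- Let α ∈ (1/2, 1), T > 0, a ≥ 0, b ≥ 0, and let u : [0, T] → [0, ∞) be measurable and bounded, satisfying u(t) ≤ a + b ∫_0^t (t − τ)^{2α−2} u(τ) dτ for all t ∈ [0, T]. Then for every γ > b · Γ(2α − 1), one has sup_{t ∈ [0, T]} u(t) ≤ (a / (1 − b Γ(2α − 1)/γ)) · E_{2α−1}(γ T^{2α−1}). -/

import Mathlib

/-!
Put `β = 2α - 1` and weight `u` by `e(t) = E_β(γ t^β)`. Integrating the series of `E_β` term by term
with the Beta integral gives `∫₀ᵗ (t - τ)^(β-1) e(τ) dτ = (Γ(β)/γ) (e(t) - 1)`, so the integral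
inequality turns a bound `u ≤ N e` into `u ≤ (a + q N) e` with `q = b Γ(β)/γ < 1`. The least such
`N`, the weighted sup of `u` (finite since `u` is bounded and `e ≥ 1`), therefore satisfies
`N ≤ a + q N`, i.e. `N ≤ a / (1 - q)`; monotonicity of `E_β` finishes the proof.
-/

/-- The Mittag-Leffler function `E_β(x) = ∑_{k=0}^∞ x^k / Γ(β k + 1)`. -/
noncomputable def mittagLeffler (β x : ℝ) : ℝ :=
  ∑' k : ℕ, x ^ k / Real.Gamma (β * k + 1)

open Real Set MeasureTheory Filter

theorem Real.mul_Gamma_le_rpow_mul_Gamma_add {y β : ℝ} (hy : 0 < y) (hβ : 0 ≤ β) (hβ1 : β ≤ 1) :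
    y * Gamma y ≤ (y + β) ^ (1 - β) * Gamma (y + β) := by
  have hyβ : 0 < y + β := by linarith
  have hΓ : 0 < Gamma (y + β) := Gamma_pos_of_pos hyβ
  -- log-convexity of `Γ` between `y + β` and `y + β + 1`, evaluated at `y + 1`
  have hconv := convexOn_log_Gamma.2 (mem_Ioi.2 hyβ) (mem_Ioi.2 (by linarith : 0 < y + β + 1))
    hβ (by linarith : 0 ≤ 1 - β) (by ring)
  have hpt : β • (y + β) + (1 - β) • (y + β + 1) = y + 1 := by simp only [smul_eq_mul]; ring
  rw [hpt] at hconv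
  simp only [Function.comp_apply, smul_eq_mul, Gamma_add_one hy.ne',
    Gamma_add_one hyβ.ne', log_mul hyβ.ne' hΓ.ne', log_mul hy.ne' (Gamma_pos_of_pos hy).ne']
    at hconv
  rw [← log_le_log_iff (by positivity) (by positivity), log_mul hy.ne' (Gamma_pos_of_pos hy).ne',
    log_mul (by positivity) hΓ.ne', log_rpow hyβ]
  linarith

theorem summable_mittagLeffler {β : ℝ} (hβ : 0 < β) (hβ1 : β ≤ 1) (x : ℝ) :
    Summable fun k : ℕ => x ^ k / Gamma (β * k + 1) := by
  refine summable_of_ratio_norm_eventually_le (r := 1 / 2) (by norm_num) ?_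
  have hlarge : Tendsto (fun k : ℕ => (β * (k + 1 : ℕ) + 1) ^ β) atTop atTop :=
    (tendsto_rpow_atTop hβ).comp <| tendsto_atTop_add_const_right _ _ <|
      (tendsto_natCast_atTop_atTop.comp (tendsto_add_atTop_nat 1)).const_mul_atTop hβ
  filter_upwards [hlarge.eventually_ge_atTop (4 * |x|)] with k hk
  set y : ℝ := β * k + 1
  have hy1 : 1 ≤ y := le_add_of_nonneg_left (by positivity)
  have hz : β * (k + 1 : ℕ) + 1 = y + β := by push_cast; ring
  rw [hz] at hk ⊢
  have hΓy : 0 < Gamma y := Gamma_pos_of_pos (by linarith)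
  have hΓz : 0 < Gamma (y + β) := Gamma_pos_of_pos (by linarith)
  have hgrowth : 2 * |x| * Gamma y ≤ Gamma (y + β) := by
    have h := mul_Gamma_le_rpow_mul_Gamma_add (by linarith : 0 < y) hβ.le hβ1
    have hsplit : (y + β) ^ β * (y + β) ^ (1 - β) = y + β := by
      rw [← rpow_add (by linarith), add_sub_cancel, rpow_one]
    have : 4 * |x| * (y * Gamma y) ≤ (y + β) ^ β * ((y + β) ^ (1 - β) * Gamma (y + β)) :=
      mul_le_mul hk h (by positivity) (by positivity)
    rw [← mul_assoc ((y + β) ^ β), hsplit] at this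
    nlinarith [abs_nonneg x]
  simp only [norm_div, norm_pow, Real.norm_eq_abs, abs_of_pos hΓy, abs_of_pos hΓz]
  rw [div_le_iff₀ hΓz, pow_succ]
  calc |x| ^ k * |x| = 1 / 2 * (|x| ^ k / Gamma y) * (2 * |x| * Gamma y) := by
        field_simp
    _ ≤ 1 / 2 * (|x| ^ k / Gamma y) * Gamma (y + β) := by gcongr

theorem one_le_mittagLeffler {β x : ℝ} (hβ : 0 < β) (hβ1 : β ≤ 1) (hx : 0 ≤ x) :
    1 ≤ mittagLeffler β x := by
  have h := (summable_mittagLeffler hβ hβ1 x).le_tsum 0 fun k _ =>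
    div_nonneg (pow_nonneg hx k) (Gamma_pos_of_pos (by positivity)).le
  simpa [mittagLeffler] using h

theorem mittagLeffler_monotoneOn {β : ℝ} (hβ : 0 < β) (hβ1 : β ≤ 1) :
    MonotoneOn (mittagLeffler β) (Ici 0) := fun x hx y _ hxy =>
  Summable.tsum_le_tsum (fun k => by gcongr)
    (summable_mittagLeffler hβ hβ1 x) (summable_mittagLeffler hβ hβ1 y)

theorem integral_sub_rpow_mul_rpow {p s t : ℝ} (hp : 0 < p) (hs : 0 < s) (ht : 0 < t) :
    ∫ τ in (0:ℝ)..t, (t - τ) ^ (p - 1) * τ ^ (s - 1) =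
      Gamma p * Gamma s / Gamma (p + s) * t ^ (p + s - 1) := by
  have hcomplex : ((∫ τ in (0:ℝ)..t, (t - τ) ^ (p - 1) * τ ^ (s - 1) : ℝ) : ℂ) =
      ∫ τ in (0:ℝ)..t, (τ : ℂ) ^ ((s : ℂ) - 1) * ((t : ℂ) - τ) ^ ((p : ℂ) - 1) := by
    rw [← intervalIntegral.integral_ofReal]
    refine intervalIntegral.integral_congr fun τ hτ => ?_
    rw [uIcc_of_le ht.le] at hτ
    rw [Complex.ofReal_mul, Complex.ofReal_cpow (sub_nonneg.2 hτ.2),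
      Complex.ofReal_cpow hτ.1, mul_comm]
    push_cast
    rfl
  have hΓ : Complex.Gamma ((s : ℂ) + p) ≠ 0 := by
    rw [← Complex.ofReal_add, Complex.Gamma_ofReal]
    exact_mod_cast (Gamma_pos_of_pos (by linarith)).ne'
  have hbeta :
      Complex.betaIntegral s p = Complex.Gamma s * Complex.Gamma p / Complex.Gamma (s + p) :=
    eq_div_of_mul_eq hΓ <| by
      rw [mul_comm, Complex.Gamma_mul_Gamma_eq_betaIntegral (by simpa using hs) (by simpa using hp)]
  rw [Complex.betaIntegral_scaled _ _ ht, hbeta] at hcomplex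
  rw [← Complex.ofReal_inj, hcomplex, Complex.ofReal_mul, Complex.ofReal_cpow ht.le,
    Complex.ofReal_div, Complex.ofReal_mul, ← Complex.Gamma_ofReal, ← Complex.Gamma_ofReal,
    ← Complex.Gamma_ofReal]
  push_cast
  ring_nf

theorem intervalIntegrable_sub_rpow_mul {p t : ℝ} {f : ℝ → ℝ} (hp : 0 < p)
    (hf : ContinuousOn f (uIcc 0 t)) :
    IntervalIntegrable (fun τ => (t - τ) ^ (p - 1) * f τ) volume 0 t := by
  have hker := (intervalIntegral.intervalIntegrable_rpow' (r := p - 1) (by linarith)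
    (a := 0) (b := t)).comp_sub_left t
  simp only [sub_zero, sub_self] at hker
  exact hker.symm.mul_continuousOn hf

theorem intervalIntegrable_sub_rpow_mul_mittagLeffler {β γ t : ℝ} (hβ : 0 < β) (hβ1 : β ≤ 1)
    (hγ : 0 ≤ γ) (ht : 0 ≤ t) :
    IntervalIntegrable (fun τ => (t - τ) ^ (β - 1) * mittagLeffler β (γ * τ ^ β)) volume 0 t := by
  have hmono : MonotoneOn (fun τ => mittagLeffler β (γ * τ ^ β)) (Icc 0 t) :=
    fun x hx y _ hxy => mittagLeffler_monotoneOn hβ hβ1 (mem_Ici.2 (by have := hx.1; positivity))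
      (mem_Ici.2 (by have := hx.1.trans hxy; positivity)) (by gcongr; exact hx.1)
  have hker := intervalIntegrable_sub_rpow_mul (t := t) (f := fun _ => 1) hβ continuousOn_const
  have hE := (hmono.mono (uIcc_of_le ht).le).intervalIntegrable (μ := volume)
  rw [intervalIntegrable_iff_integrableOn_Ioc_of_le ht] at hker hE ⊢
  simp only [mul_one] at hker
  refine hker.mul_bdd hE.aestronglyMeasurable (c := mittagLeffler β (γ * t ^ β)) ?_
  refine ae_restrict_of_forall_mem measurableSet_Ioc fun τ hτ => ?_
  have hτ0 := hτ.1.le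
  rw [norm_of_nonneg (zero_le_one.trans (one_le_mittagLeffler hβ hβ1 (by positivity)))]
  exact hmono (Ioc_subset_Icc_self hτ) (right_mem_Icc.2 ht) hτ.2

theorem integral_sub_rpow_mul_mittagLeffler {β γ t : ℝ} (hβ : 0 < β) (hβ1 : β ≤ 1)
    (hγ : 0 < γ) (ht : 0 < t) :
    ∫ τ in (0:ℝ)..t, (t - τ) ^ (β - 1) * mittagLeffler β (γ * τ ^ β) =
      Gamma β / γ * (mittagLeffler β (γ * t ^ β) - 1) := by
  set F : ℕ → ℝ → ℝ := fun k τ => (t - τ) ^ (β - 1) * ((γ * τ ^ β) ^ k / Gamma (β * k + 1))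
  have hF_int (k : ℕ) : IntegrableOn (F k) (Ioc 0 t) :=
    (intervalIntegrable_iff_integrableOn_Ioc_of_le ht.le).1
      (intervalIntegrable_sub_rpow_mul hβ (by fun_prop (disch := positivity)))
  have hF_integral (k : ℕ) : ∫ τ in Ioc 0 t, F k τ =
      Gamma β / γ * ((γ * t ^ β) ^ (k + 1) / Gamma (β * (k + 1 : ℕ) + 1)) := by
    have hF : ∀ τ ∈ uIcc 0 t, F k τ =
        γ ^ k / Gamma (β * k + 1) * ((t - τ) ^ (β - 1) * τ ^ (β * k + 1 - 1)) := by
      intro τ hτ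
      rw [uIcc_of_le ht.le] at hτ
      simp only [F, add_sub_cancel_right, mul_pow, ← rpow_natCast (τ ^ β), ← rpow_mul hτ.1]
      ring
    rw [← intervalIntegral.integral_of_le ht.le, intervalIntegral.integral_congr hF,
      intervalIntegral.integral_const_mul, integral_sub_rpow_mul_rpow hβ (by positivity) ht]
    have hΓ := (Gamma_pos_of_pos (by positivity : 0 < β * k + 1)).ne'
    rw [mul_pow, ← rpow_natCast (t ^ β), ← rpow_mul ht.le]
    push_cast
    field_simp
    ring_nf
  have hF_summable : Summable fun k => ∫ τ in Ioc 0 t, ‖F k τ‖ := by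
    have hnorm (k : ℕ) : ∫ τ in Ioc 0 t, ‖F k τ‖ = ∫ τ in Ioc 0 t, F k τ :=
      setIntegral_congr_fun measurableSet_Ioc fun τ hτ =>
        norm_of_nonneg (by have := hτ.1.le; have := sub_nonneg.2 hτ.2; positivity)
    simp only [hnorm, hF_integral]
    exact ((summable_nat_add_iff 1).2 (summable_mittagLeffler hβ hβ1 _)).mul_left _
  have hsum := hasSum_integral_of_summable_integral_norm hF_int hF_summable
  simp only [F, tsum_mul_left, hF_integral] at hsum
  rw [intervalIntegral.integral_of_le ht.le]
  refine hsum.unique ?_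
  have hshift := (hasSum_nat_add_iff' 1).2 (summable_mittagLeffler hβ hβ1 (γ * t ^ β)).hasSum
  simpa [mittagLeffler] using hshift.mul_left (Gamma β / γ)

theorem le_div_one_sub_mul_of_forall_le_add_mul {ι : Type*} {s : Set ι} {u e : ι → ℝ}
    {a q M : ℝ} (he : ∀ t ∈ s, 0 < e t) (hq : q < 1) (hM : ∀ t ∈ s, u t ≤ M * e t)
    (hstep : ∀ N, (∀ t ∈ s, u t ≤ N * e t) → ∀ t ∈ s, u t ≤ (a + q * N) * e t) :
    ∀ t ∈ s, u t ≤ a / (1 - q) * e t := by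
  intro t ht
  set N := sSup ((fun t => u t / e t) '' s)
  have hbdd : BddAbove ((fun t => u t / e t) '' s) :=
    ⟨M, forall_mem_image.2 fun t ht => (div_le_iff₀ (he t ht)).2 (hM t ht)⟩
  have hN : ∀ t ∈ s, u t ≤ N * e t := fun t ht =>
    (div_le_iff₀ (he t ht)).1 (le_csSup hbdd (mem_image_of_mem _ ht))
  have hfix : N ≤ a + q * N := csSup_le (nonempty_of_mem ht |>.image _)
    (forall_mem_image.2 fun t ht => (div_le_iff₀ (he t ht)).2 (hstep N hN t ht))
  have hNle : N ≤ a / (1 - q) := (le_div_iff₀ (sub_pos.2 hq)).2 (by linarith)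
  exact (hN t ht).trans (mul_le_mul_of_nonneg_right hNle (he t ht).le)

theorem le_add_mul_mittagLeffler_of_le_mul_mittagLeffler {β T a b γ N : ℝ} {u : ℝ → ℝ}
    (hβ : 0 < β) (hβ1 : β ≤ 1) (ha : 0 ≤ a) (hb : 0 ≤ b) (hγ : 0 < γ)
    (hu : ∀ t ∈ Icc 0 T, 0 ≤ u t)
    (hineq : ∀ t ∈ Icc 0 T, u t ≤ a + b * ∫ τ in (0:ℝ)..t, (t - τ) ^ (β - 1) * u τ)
    (hN : ∀ t ∈ Icc 0 T, u t ≤ N * mittagLeffler β (γ * t ^ β)) :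
    ∀ t ∈ Icc 0 T, u t ≤ (a + b * Gamma β / γ * N) * mittagLeffler β (γ * t ^ β) := by
  intro t ht
  set E : ℝ → ℝ := fun τ => mittagLeffler β (γ * τ ^ β)
  have hE (τ : ℝ) (hτ : 0 ≤ τ) : 1 ≤ E τ := one_le_mittagLeffler hβ hβ1 (by positivity)
  have hN0 : 0 ≤ N :=
    nonneg_of_mul_nonneg_left ((hu t ht).trans (hN t ht)) (zero_lt_one.trans_le (hE t ht.1))
  have hq : 0 ≤ b * Gamma β / γ := by have := Gamma_pos_of_pos hβ; positivity
  have hconv : b * ∫ τ in (0:ℝ)..t, (t - τ) ^ (β - 1) * u τ ≤ b * Gamma β / γ * N * (E t - 1) := by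
    rcases ht.1.eq_or_lt with rfl | htpos
    · simpa using mul_nonneg (mul_nonneg hq hN0) (sub_nonneg.2 (hE 0 le_rfl))
    have hsub : Ioc 0 t ⊆ Icc 0 T := Ioc_subset_Icc_self.trans (Icc_subset_Icc_right ht.2)
    have hmono : ∫ τ in (0:ℝ)..t, (t - τ) ^ (β - 1) * u τ ≤
        ∫ τ in (0:ℝ)..t, (t - τ) ^ (β - 1) * (N * E τ) := by
      simp only [intervalIntegral.integral_of_le ht.1]
      refine integral_mono_of_nonneg ?_ ?_ ?_
      · refine ae_restrict_of_forall_mem measurableSet_Ioc fun τ hτ => ?_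
        exact mul_nonneg (rpow_nonneg (sub_nonneg.2 hτ.2) _) (hu τ (hsub hτ))
      · simp only [mul_left_comm _ N, E]
        exact ((intervalIntegrable_sub_rpow_mul_mittagLeffler hβ hβ1 hγ.le ht.1).const_mul N).1
      · refine ae_restrict_of_forall_mem measurableSet_Ioc fun τ hτ => ?_
        exact mul_le_mul_of_nonneg_left (hN τ (hsub hτ)) (rpow_nonneg (sub_nonneg.2 hτ.2) _)
    calc b * ∫ τ in (0:ℝ)..t, (t - τ) ^ (β - 1) * u τ
        ≤ b * ∫ τ in (0:ℝ)..t, (t - τ) ^ (β - 1) * (N * E τ) := mul_le_mul_of_nonneg_left hmono hb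
      _ = b * Gamma β / γ * N * (E t - 1) := by
        simp only [mul_left_comm _ N, intervalIntegral.integral_const_mul, E,
          integral_sub_rpow_mul_mittagLeffler hβ hβ1 hγ htpos]
        ring
  calc u t ≤ a + b * Gamma β / γ * N * (E t - 1) := (hineq t ht).trans (by linarith)
    _ ≤ (a + b * Gamma β / γ * N) * E t := by nlinarith [hE t ht.1, mul_nonneg hq hN0]

theorem gronwall_singular_kernel_general (α T a b : ℝ) (hα : α ∈ Set.Ioo (1 / 2 : ℝ) 1)
    (hb : 0 ≤ b)
    (u : ℝ → ℝ)
    (hnonneg : ∀ t ∈ Set.Icc (0:ℝ) T, 0 ≤ u t)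
    (hbdd : ∃ M : ℝ, ∀ t ∈ Set.Icc (0:ℝ) T, u t ≤ M)
    (hineq : ∀ t ∈ Set.Icc (0:ℝ) T,
      u t ≤ a + b * ∫ τ in (0:ℝ)..t, (t - τ) ^ (2 * α - 2) * u τ)
    (γ : ℝ) (hγ : b * Real.Gamma (2 * α - 1) < γ) :
    ∀ t ∈ Set.Icc (0:ℝ) T,
      u t ≤ a / (1 - b * Real.Gamma (2 * α - 1) / γ) *
        mittagLeffler (2 * α - 1) (γ * T ^ (2 * α - 1)) := by
  intro t ht
  have hβ : 0 < 2 * α - 1 := by linarith [hα.1]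
  have hβ1 : 2 * α - 1 ≤ 1 := by linarith [hα.2]
  have hγ0 : 0 < γ := (mul_nonneg hb (Gamma_pos_of_pos hβ).le).trans_lt hγ
  have hq : b * Gamma (2 * α - 1) / γ < 1 := (div_lt_one hγ0).2 hγ
  have hineq' : ∀ t ∈ Icc 0 T,
      u t ≤ a + b * ∫ τ in (0:ℝ)..t, (t - τ) ^ (2 * α - 1 - 1) * u τ := by
    simpa only [show 2 * α - 1 - 1 = 2 * α - 2 by ring] using hineq
  have h0 : (0 : ℝ) ∈ Icc 0 T := ⟨le_rfl, ht.1.trans ht.2⟩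
  have ha : 0 ≤ a := (hnonneg 0 h0).trans (by simpa using hineq 0 h0)
  have hE (τ : ℝ) (hτ : τ ∈ Icc 0 T) : 1 ≤ mittagLeffler (2 * α - 1) (γ * τ ^ (2 * α - 1)) :=
    one_le_mittagLeffler hβ hβ1 (by have := hτ.1; positivity)
  obtain ⟨M, hM⟩ := hbdd
  have hM' (τ : ℝ) (hτ : τ ∈ Icc 0 T) :
      u τ ≤ max M 0 * mittagLeffler (2 * α - 1) (γ * τ ^ (2 * α - 1)) :=
    ((hM τ hτ).trans (le_max_left M 0)).trans (le_mul_of_one_le_right (le_max_right M 0) (hE τ hτ))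
  have hweighted := le_div_one_sub_mul_of_forall_le_add_mul
    (fun τ hτ => zero_lt_one.trans_le (hE τ hτ)) hq hM' fun N hN =>
      le_add_mul_mittagLeffler_of_le_mul_mittagLeffler hβ hβ1 ha hb hγ0 hnonneg hineq' hN
  refine (hweighted t ht).trans (mul_le_mul_of_nonneg_left ?_ (div_nonneg ha (by linarith)))
  exact mittagLeffler_monotoneOn hβ hβ1 (mem_Ici.2 (by have := ht.1; positivity))
    (mem_Ici.2 (by have := h0.2; positivity)) (by gcongr; exacts [ht.1, ht.2])

/-- Gronwall-type estimate with singular kernel: if `u : [0,T] → [0,∞)` is measurable and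
bounded with `u(t) ≤ a + b ∫_0^t (t − τ)^(2α−2) u(τ) dτ` on `[0, T]`, then for any
`γ > b Γ(2α−1)`, `sup_{[0,T]} u ≤ (a / (1 − b Γ(2α−1)/γ)) E_{2α−1}(γ T^(2α−1))`. -/
theorem gronwall_singular_kernel (α T a b : ℝ) (hα : α ∈ Set.Ioo (1 / 2 : ℝ) 1)
    (hT : 0 < T) (ha : 0 ≤ a) (hb : 0 ≤ b)
    (u : ℝ → ℝ) (hmeas : Measurable u)
    (hnonneg : ∀ t ∈ Set.Icc (0:ℝ) T, 0 ≤ u t)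
    (hbdd : ∃ M : ℝ, ∀ t ∈ Set.Icc (0:ℝ) T, u t ≤ M)
    (hineq : ∀ t ∈ Set.Icc (0:ℝ) T,
      u t ≤ a + b * ∫ τ in (0:ℝ)..t, (t - τ) ^ (2 * α - 2) * u τ)
    (γ : ℝ) (hγ : b * Real.Gamma (2 * α - 1) < γ) :
    ∀ t ∈ Set.Icc (0:ℝ) T,
      u t ≤ a / (1 - b * Real.Gamma (2 * α - 1) / γ) *
        mittagLeffler (2 * α - 1) (γ * T ^ (2 * α - 1)) :=
  gronwall_singular_kernel_general α T a b hα hb u hnonneg hbdd hineq γ hγ
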